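/- Let G be a finite group, N a normal subgroup of G, and H a subgroup of G containing N. Then μ_G(H) = μ_{G/N}(H/N), λ_G(H) = λ_{G/N}(H/N), and [N_{G'}(H) : G' ∩ H] = [N_{(G/N)'}(H/N) : (G/N)' ∩ (H/N)], where G' denotes the commutator subgroup. In particular, the identity μ_G(H) = [N_{G'}(H) : G' ∩ H] · λ_G(H) holds if and only if the corresponding identity holds for H/N in G/N. -/

import Mathlib

open Classical in
/-- The Möbius function of a finite partial order with a top element:
`mob ⊤ = 1` and `mob x = -∑_{x < y ≤ ⊤} mob y` for `x ≠ ⊤`. -/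
noncomputable def mob {α : Type*} [PartialOrder α] [OrderTop α] [Finite α] (x : α) : ℤ :=
  if x = ⊤ then 1
  else - ∑ y ∈ (Set.toFinite {y : α | x < y}).toFinset.attach, mob y.1
termination_by (Set.toFinite {y : α | x < y}).toFinset.card
decreasing_by
  have hy : x < y.1 := by
    have h2 := y.2
    rwa [Set.Finite.mem_toFinset] at h2
  refine Finset.card_lt_card ?_
  rw [Finset.ssubset_iff_of_subset]
  · exact ⟨y.1, by rwa [Set.Finite.mem_toFinset], by simp [Set.Finite.mem_toFinset]⟩
  · intro z hz
    rw [Set.Finite.mem_toFinset] at hz ⊢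
    exact hy.trans hz

section C

variable (G : Type*) [Group G]

instance subgroupFinite [Finite G] : Finite (Subgroup G) :=
  Finite.of_injective (fun H => (H : Set G)) SetLike.coe_injective

/-- Type synonym for `Subgroup G`, endowed with the preorder `H ≼ K` iff
`H ≤ gKg⁻¹` for some `g : G`. -/
def CSub := Subgroup G

variable {G}

/-- Conversion from `Subgroup G` to the type synonym `CSub G`. -/
def CSub.mk (H : Subgroup G) : CSub G := H

/-- Conversion from the type synonym `CSub G` to `Subgroup G`. -/
def CSub.toSubgroup (H : CSub G) : Subgroup G := H

variable (G)

instance : Preorder (CSub G) where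
  le H K := ∃ g : G, H.toSubgroup ≤ K.toSubgroup.map (MulAut.conj g).toMonoidHom
  le_refl H := ⟨1, by
    simp only [map_one]
    rw [show MulEquiv.toMonoidHom (1 : MulAut G) = MonoidHom.id G from rfl, Subgroup.map_id]⟩
  le_trans H K L := by
    rintro ⟨g, hg⟩ ⟨h, hh⟩
    refine ⟨g * h, hg.trans ?_⟩
    have hm := Subgroup.map_mono (f := (MulAut.conj g).toMonoidHom) hh
    rw [Subgroup.map_map] at hm
    refine hm.trans (le_of_eq ?_)
    congr 1
    ext x
    simp [mul_assoc]

instance [Finite G] : Finite (CSub G) := subgroupFinite G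

/-- The poset of conjugacy classes of subgroups of `G`: for a finite group this is
the quotient of subgroups by conjugacy, with `[H] ≤ [K]` iff `H ≤ gKg⁻¹` for some `g ∈ G`. -/
abbrev ConjClassSub := Antisymmetrization (CSub G) (· ≤ ·)

/-- The conjugacy class of a subgroup, as an element of `ConjClassSub G`. -/
def conjClassOf (H : Subgroup G) : ConjClassSub G :=
  toAntisymmetrization (α := CSub G) (· ≤ ·) (CSub.mk H)

instance : OrderTop (ConjClassSub G) where
  top := conjClassOf G ⊤
  le_top c := by
    induction c using Quotient.ind with
    | _ H =>
      show toAntisymmetrization (α := CSub G) (· ≤ ·) H ≤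
        toAntisymmetrization (α := CSub G) (· ≤ ·) (CSub.mk ⊤)
      rw [toAntisymmetrization_le_toAntisymmetrization_iff]
      refine ⟨1, ?_⟩
      show H.toSubgroup ≤ Subgroup.map (MulAut.conj (1:G)).toMonoidHom (⊤ : Subgroup G)
      rw [Subgroup.map_top_of_surjective _ (MulAut.conj (1:G)).surjective]
      exact le_top

instance [Finite G] : Finite (ConjClassSub G) := Quotient.finite _

variable {G}

/-- The Möbius function `μ_G` on the subgroup lattice of the finite group `G`. -/
noncomputable def muSub [Finite G] (H : Subgroup G) : ℤ := mob H

/-- The Möbius function `λ_G` on the poset of conjugacy classes of subgroups of the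
finite group `G`, evaluated at the class of `H`. -/
noncomputable def lamSub [Finite G] (H : Subgroup G) : ℤ :=
  mob (conjClassOf G H)

/-- `G` satisfies the (μ,λ)-property if `μ_G(H) = [N_{G'}(H) : G' ∩ H] · λ_G(H)`
for every subgroup `H ≤ G`, where `G' = [G,G]` and `N_{G'}(H) = N_G(H) ∩ G'`. -/
def MuLambdaProperty (G : Type*) [Group G] [Finite G] : Prop :=
  ∀ H : Subgroup G,
    muSub H =
      ((commutator G ⊓ H).relIndex (Subgroup.normalizer (H : Set G) ⊓ commutator G) : ℤ) * lamSub H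

/-- `MaxInt G` consists of `G` itself (the subgroup `⊤`) together with all
intersections of nonempty families of maximal subgroups of `G`. -/
def MaxInt (G : Type*) [Group G] : Set (Subgroup G) :=
  {H | H = ⊤ ∨ ∃ S : Set (Subgroup G), S.Nonempty ∧ (∀ M ∈ S, IsCoatom M) ∧ H = sInf S}

end C

instance {n R : Type*} [DecidableEq n] [Fintype n] [CommRing R] [Finite R] :
    Finite (Matrix.SpecialLinearGroup n R) :=
  Finite.of_injective (fun A => (A : Matrix n n R)) Subtype.coe_injective

/-
Let `φ : G → Q` be surjective with kernel contained in `H`. Taking images and preimages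
under `φ` is an order isomorphism between the subgroups of `G` above `H` and the subgroups
of `Q` above `φ(H)`; it commutes with conjugation (`φ(gKg⁻¹) = φ(g)φ(K)φ(g)⁻¹`), and a
normal subgroup contained in a conjugate of `K` is contained in `K`, so it also induces an
order isomorphism between the conjugacy classes above `[H]` and those above `[φ(H)]`. The
Möbius function at `x` only depends on the interval `[x, ⊤]`, which gives the equalities of
`μ` and `λ`. For the index, `[N_{G'}(H) : G' ∩ H] = [N_G(H) ∩ G' : H ∩ N_G(H) ∩ G']`, and
`φ` maps `N_G(H) ∩ G'` onto `N_Q(φ H) ∩ Q'` (as `ker φ ≤ N_G(H)`) while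
`φ⁻¹(φ H) = H`.
-/

section Mobius

variable {α β : Type*} [PartialOrder α] [OrderTop α] [Finite α]
  [PartialOrder β] [OrderTop β] [Finite β]

theorem mob_top : mob (⊤ : α) = 1 := by
  rw [mob, if_pos rfl]

theorem mob_of_ne_top {x : α} (hx : x ≠ ⊤) : mob x = -∑ᶠ y ∈ Set.Ioi x, mob y := by
  rw [mob, if_neg hx, Finset.sum_attach _ mob, finsum_mem_eq_finite_toFinset_sum]
  rfl

theorem mob_orderEmbedding_apply (e : α ↪o β) (he : IsUpperSet (Set.range e)) (x : α) :
    mob (e x) = mob x := by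
  have e_top : e ⊤ = ⊤ := by
    obtain ⟨a, ha⟩ := he (le_top (a := e ⊤)) (Set.mem_range_self ⊤)
    exact top_unique (ha ▸ e.monotone le_top)
  induction x using WellFoundedGT.induction with
  | _ x ih =>
  by_cases hx : x = ⊤
  · rw [hx, e_top, mob_top, mob_top]
  have hex : e x ≠ ⊤ := by rwa [← e_top, Ne, e.eq_iff_eq]
  have image_Ioi : Set.Ioi (e x) = e '' Set.Ioi x := by
    ext z
    constructor
    · intro hz
      obtain ⟨y, rfl⟩ := he (le_of_lt hz) (Set.mem_range_self x)
      exact ⟨y, e.lt_iff_lt.mp hz, rfl⟩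
    · rintro ⟨y, hy, rfl⟩
      exact e.lt_iff_lt.mpr hy
  rw [mob_of_ne_top hx, mob_of_ne_top hex, image_Ioi, finsum_mem_image e.injective.injOn]
  exact congrArg Neg.neg (finsum_mem_congr rfl ih)

theorem mob_bot_Ici (x : α) : mob (⊥ : Set.Ici x) = mob x :=
  (mob_orderEmbedding_apply (OrderEmbedding.subtype (· ∈ Set.Ici x))
    (by rw [OrderEmbedding.coe_subtype, Subtype.range_coe]; exact isUpperSet_Ici x) ⊥).symm

theorem mob_eq_of_orderIso_Ici {x : α} {y : β} (e : Set.Ici x ≃o Set.Ici y) :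
    mob x = mob y := by
  rw [← mob_bot_Ici x, ← mob_bot_Ici y, ← e.map_bot]
  exact (mob_orderEmbedding_apply e.toOrderEmbedding (by simpa using isUpperSet_univ) ⊥).symm

end Mobius

def OrderIso.iciOfInverse {α β : Type*} [Preorder α] [Preorder β] (f : α →o β)
    (g : β →o α) (a : α) (hgf : ∀ c, a ≤ c → g (f c) = c) (hfg : ∀ d, f (g d) = d) :
    Set.Ici a ≃o Set.Ici (f a) where
  toFun c := ⟨f c, f.mono c.2⟩
  invFun d := ⟨g d, (hgf a le_rfl).symm.trans_le (g.mono d.2)⟩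
  left_inv c := Subtype.ext (hgf c c.2)
  right_inv d := Subtype.ext (hfg d)
  map_rel_iff' {c c'} := by
    refine ⟨fun h => ?_, fun h => f.mono h⟩
    have h' := g.mono (show f c ≤ f c' from h)
    rwa [hgf c c.2, hgf c' c'.2] at h'

section SurjectiveHom

open Subgroup

variable {G Q : Type*} [Group G] [Group Q] (φ : G →* Q)

theorem Subgroup.map_map_conj (g : G) (K : Subgroup G) :
    (K.map (MulAut.conj g).toMonoidHom).map φ =
      (K.map φ).map (MulAut.conj (φ g)).toMonoidHom := by
  rw [map_map, map_map]
  congr 1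
  ext x
  simp

theorem Subgroup.comap_map_conj (g : G) (L : Subgroup Q) :
    (L.map (MulAut.conj (φ g)).toMonoidHom).comap φ =
      (L.comap φ).map (MulAut.conj g).toMonoidHom := by
  ext x
  simp only [map_equiv_eq_comap_symm', mem_comap]
  simp

theorem Subgroup.map_inf_of_ker_le {A : Subgroup G} (B : Subgroup G) (hA : φ.ker ≤ A) :
    (A ⊓ B).map φ = A.map φ ⊓ B.map φ := by
  refine le_antisymm (map_inf_le A B φ) ?_
  rintro _ ⟨⟨a, ha, hφa⟩, ⟨b, hb, rfl⟩⟩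
  have hab : a * b⁻¹ ∈ φ.ker := by rw [φ.mem_ker, map_mul, map_inv, hφa, mul_inv_cancel]
  exact ⟨b, ⟨by simpa using A.mul_mem (A.inv_mem (hA hab)) ha, hb⟩, rfl⟩

theorem Subgroup.relIndex_map_map_of_ker_le {H : Subgroup G} (K : Subgroup G) (hH : φ.ker ≤ H) :
    (H.map φ).relIndex (K.map φ) = H.relIndex K := by
  rw [← relIndex_comap, comap_map_eq_self hH]

theorem Subgroup.relIndex_inf_left_of_le {K L : Subgroup G} (H : Subgroup G) (hLK : L ≤ K) :
    (K ⊓ H).relIndex L = H.relIndex L := by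
  rw [← inf_relIndex_right, inf_assoc, inf_eq_right.mpr (inf_le_right.trans hLK),
    inf_relIndex_right]

variable {φ}

theorem commutator_eq_map_of_surjective (hφ : Function.Surjective φ) :
    commutator Q = (commutator G).map φ := by
  rw [commutator_def, commutator_def, map_commutator, map_top_of_surjective φ hφ]

theorem Subgroup.normalizer_map_of_ker_le (hφ : Function.Surjective φ) {H : Subgroup G}
    (hH : φ.ker ≤ H) : normalizer (H.map φ : Set Q) = (normalizer (H : Set G)).map φ := by
  rw [← map_comap_eq_self_of_surjective hφ (normalizer _),
    comap_normalizer_eq_of_surjective _ hφ, comap_map_eq_self hH]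

theorem relIndex_normalizer_commutator_map_of_ker_le (hφ : Function.Surjective φ)
    {H : Subgroup G} (hH : φ.ker ≤ H) :
    (commutator Q ⊓ H.map φ).relIndex (normalizer (H.map φ : Set Q) ⊓ commutator Q) =
      (commutator G ⊓ H).relIndex (normalizer (H : Set G) ⊓ commutator G) := by
  rw [relIndex_inf_left_of_le _ inf_le_right, relIndex_inf_left_of_le _ inf_le_right,
    normalizer_map_of_ker_le hφ hH, commutator_eq_map_of_surjective hφ,
    ← map_inf_of_ker_le φ _ (hH.trans le_normalizer),
    relIndex_map_map_of_ker_le φ _ hH]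

end SurjectiveHom

section ConjugacyClasses

open Subgroup

variable {G Q : Type*} [Group G] [Group Q] (φ : G →* Q)

def CSub.mapHom : CSub G →o CSub Q where
  toFun K := CSub.mk (K.toSubgroup.map φ)
  monotone' K L := fun ⟨g, hg⟩ => ⟨φ g, by
    show K.toSubgroup.map φ ≤ (L.toSubgroup.map φ).map _
    rw [← map_map_conj]
    exact map_mono hg⟩

variable {φ}

def CSub.comapHom (hφ : Function.Surjective φ) : CSub Q →o CSub G where
  toFun K := CSub.mk (K.toSubgroup.comap φ)
  monotone' K L := fun ⟨q, hq⟩ => by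
    obtain ⟨g, rfl⟩ := hφ q
    refine ⟨g, ?_⟩
    show K.toSubgroup.comap φ ≤ (L.toSubgroup.comap φ).map _
    rw [← comap_map_conj]
    exact comap_mono hq

theorem Subgroup.Normal.le_of_le_map_conj {N K : Subgroup G} [N.Normal] {g : G}
    (hN : N ≤ K.map (MulAut.conj g).toMonoidHom) : N ≤ K := by
  intro n hn
  have h := hN (‹N.Normal›.conj_mem n hn g)
  rw [map_equiv_eq_comap_symm', mem_comap] at h
  simpa [mul_assoc] using h

theorem muSub_map_of_ker_le [Finite G] [Finite Q] (hφ : Function.Surjective φ) {H : Subgroup G}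
    (hH : φ.ker ≤ H) : muSub (H.map φ) = muSub H :=
  (mob_eq_of_orderIso_Ici (OrderIso.iciOfInverse ⟨map φ, (gc_map_comap φ).monotone_l⟩
    ⟨comap φ, (gc_map_comap φ).monotone_u⟩ H
    (fun _ hK => comap_map_eq_self (hH.trans hK)) (map_comap_eq_self_of_surjective hφ))).symm

theorem lamSub_map_of_ker_le [Finite G] [Finite Q] (hφ : Function.Surjective φ) {H : Subgroup G}
    (hH : φ.ker ≤ H) : lamSub (H.map φ) = lamSub H := by
  refine (mob_eq_of_orderIso_Ici (OrderIso.iciOfInverse (CSub.mapHom φ).antisymmetrization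
    (CSub.comapHom hφ).antisymmetrization (conjClassOf G H) ?_ ?_)).symm
  · intro c hc
    induction c using Quotient.ind with | _ K =>
    obtain ⟨g, hg⟩ := toAntisymmetrization_le_toAntisymmetrization_iff.mp hc
    exact congrArg (toAntisymmetrization _)
      (comap_map_eq_self (Normal.le_of_le_map_conj (hH.trans hg)))
  · intro c
    induction c using Quotient.ind with | _ K =>
    exact congrArg (toAntisymmetrization _) (map_comap_eq_self_of_surjective hφ K.toSubgroup)

end ConjugacyClasses

open scoped MatrixGroups

/-- For a normal subgroup `N ≤ H` of a finite group `G`: `μ_G(H) = μ_{G/N}(H/N)`,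
`λ_G(H) = λ_{G/N}(H/N)`, the indices `[N_{G'}(H) : G' ∩ H]` and
`[N_{(G/N)'}(H/N) : (G/N)' ∩ H/N]` agree, and hence the (μ,λ)-identity holds for `H` in `G`
iff it holds for `H/N` in `G/N`. -/
theorem mu_lam_quotient (G : Type*) [Group G] [Finite G] (N : Subgroup G) [N.Normal]
    (H : Subgroup G) (hNH : N ≤ H) :
    muSub H = muSub (H.map (QuotientGroup.mk' N)) ∧
    lamSub H = lamSub (H.map (QuotientGroup.mk' N)) ∧
    (commutator G ⊓ H).relIndex (Subgroup.normalizer (H : Set G) ⊓ commutator G) =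
      (commutator (G ⧸ N) ⊓ (H.map (QuotientGroup.mk' N))).relIndex
        (Subgroup.normalizer ((H.map (QuotientGroup.mk' N) : Subgroup (G ⧸ N)) : Set (G ⧸ N)) ⊓ commutator (G ⧸ N)) ∧
    (muSub H = ((commutator G ⊓ H).relIndex (Subgroup.normalizer (H : Set G) ⊓ commutator G) : ℤ) * lamSub H ↔
      muSub (H.map (QuotientGroup.mk' N)) =
        ((commutator (G ⧸ N) ⊓ (H.map (QuotientGroup.mk' N))).relIndex
          (Subgroup.normalizer ((H.map (QuotientGroup.mk' N) : Subgroup (G ⧸ N)) : Set (G ⧸ N)) ⊓ commutator (G ⧸ N)) : ℤ) * lamSub (H.map (QuotientGroup.mk' N))) := by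
  have hφ := QuotientGroup.mk'_surjective N
  have hker : (QuotientGroup.mk' N).ker ≤ H := (QuotientGroup.ker_mk' N).trans_le hNH
  have hmu := (muSub_map_of_ker_le hφ hker).symm
  have hlam := (lamSub_map_of_ker_le hφ hker).symm
  have hindex := (relIndex_normalizer_commutator_map_of_ker_le hφ hker).symm
  refine ⟨hmu, hlam, hindex, ?_⟩
  rw [hmu, hlam, hindex]
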